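/- First-Fit half-full property: if First Fit packs a list of items of sizes in (0,1] into unit bins and uses N ≥ 2 bins, then the total size of the items is greater than (N-1)/2; equivalently, at most one pair of bins can both be at most half full. -/
import Mathlib


open Classical in
/-- One step of First Fit: place the item of size `s` into the first bin with
enough remaining capacity, opening a new bin if none exists.  The state is the
list of bin loads. -/
noncomputable def ffStep (bins : List ℝ) (s : ℝ) : List ℝ :=
  match bins.findIdx? (fun l => l + s ≤ 1) with
  | some i => bins.set i (bins.getD i 0 + s)
  | none => bins ++ [s]

/-- Invariant: all loads are positive and no two bins are both at most half full. -/
def FFInv (bins : List ℝ) : Prop :=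
  (∀ l ∈ bins, 0 < l) ∧
  (∀ i j, i < j → j < bins.length → (1/2 : ℝ) < bins.getD i 0 ∨ (1/2 : ℝ) < bins.getD j 0)

lemma sum_set_real (l : List ℝ) (i : ℕ) (a : ℝ) (h : i < l.length) :
    (l.set i a).sum = l.sum - l.getD i 0 + a := by
  induction l generalizing i with
  | nil => simp at h
  | cons x t ih =>
    cases i with
    | zero => simp [List.set]; ring
    | succ n =>
      simp only [List.set, List.sum_cons, List.getD_cons_succ]
      rw [ih n (by simpa using h)]
      ring

lemma getD_set_real (l : List ℝ) (i j : ℕ) (a : ℝ) :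
    (l.set i a).getD j 0 = if i = j ∧ i < l.length then a else l.getD j 0 := by
  induction l generalizing i j with
  | nil => simp
  | cons x t ih =>
    cases i with
    | zero =>
      cases j with
      | zero => simp
      | succ m => simp
    | succ n =>
      cases j with
      | zero => simp
      | succ m =>
        simp only [List.set, List.getD_cons_succ, ih n m, List.length_cons]
        by_cases h : n = m ∧ n < t.length
        · simp [h, h.1, Nat.succ_lt_succ h.2]
        · have : ¬(n + 1 = m + 1 ∧ n + 1 < t.length + 1) := by
            intro ⟨h1, h2⟩; exact h ⟨Nat.succ_injective h1, Nat.lt_of_succ_lt_succ h2⟩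
          simp [h, this]

lemma ffStep_inv (bins : List ℝ) (s : ℝ) (hs : 0 < s) (hs1 : s ≤ 1) (hinv : FFInv bins) :
    FFInv (ffStep bins s) ∧ (ffStep bins s).sum = bins.sum + s := by
  obtain ⟨hpos, hQ⟩ := hinv
  unfold ffStep
  cases hfi : bins.findIdx? (fun l => l + s ≤ 1) with
  | some i =>
    simp only
    obtain ⟨hilt, hfidx⟩ := List.findIdx?_eq_some_iff_findIdx_eq.mp hfi
    have hgd : bins.getD i 0 = bins[i] := List.getD_eq_getElem bins 0 hilt
    have hge0 : (0:ℝ) ≤ bins.getD i 0 := by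
      rw [hgd]; exact le_of_lt (hpos _ (List.getElem_mem hilt))
    refine ⟨⟨?_, ?_⟩, ?_⟩
    · intro l hl
      rcases List.mem_or_eq_of_mem_set hl with h | h
      · exact hpos l h
      · rw [h]; linarith
    · intro a b hab hbl
      rw [List.length_set] at hbl
      have ha := getD_set_real bins i a (bins.getD i 0 + s)
      have hb := getD_set_real bins i b (bins.getD i 0 + s)
      rcases hQ a b hab hbl with h | h
      · left; rw [ha]; split_ifs with hc
        · obtain ⟨rfl, -⟩ := hc; linarith
        · exact h
      · right; rw [hb]; split_ifs with hc
        · obtain ⟨rfl, -⟩ := hc; linarith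
        · exact h
    · rw [sum_set_real bins i _ hilt]; ring
  | none =>
    simp only
    have hall : ∀ x ∈ bins, ¬(x + s ≤ 1) := by
      intro x hx
      have := List.findIdx?_eq_none_iff.mp hfi x hx
      simpa using this
    refine ⟨⟨?_, ?_⟩, by simp⟩
    · intro l hl
      rcases List.mem_append.mp hl with h | h
      · exact hpos l h
      · simp only [List.mem_singleton] at h; exact h ▸ hs
    · intro a b hab hbl
      simp only [List.length_append, List.length_singleton] at hbl
      by_cases hb : b < bins.length
      · have ha : a < bins.length := lt_trans hab hb
        have hga : (bins ++ [s]).getD a 0 = bins.getD a 0 := by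
          rw [List.getD_eq_getElem _ _ (by simp; omega), List.getD_eq_getElem _ _ ha,
            List.getElem_append_left ha]
        have hgb : (bins ++ [s]).getD b 0 = bins.getD b 0 := by
          rw [List.getD_eq_getElem _ _ (by simp; omega), List.getD_eq_getElem _ _ hb,
            List.getElem_append_left hb]
        rw [hga, hgb]
        exact hQ a b hab hb
      · have hbeq : b = bins.length := by omega
        have ha : a < bins.length := by omega
        have hga : (bins ++ [s]).getD a 0 = bins.getD a 0 := by
          rw [List.getD_eq_getElem _ _ (by simp; omega), List.getD_eq_getElem _ _ ha,
            List.getElem_append_left ha]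
        have hgb : (bins ++ [s]).getD b 0 = s := by
          rw [hbeq, List.getD_eq_getElem _ _ (by simp)]
          simp
        have hx := hall _ (List.getElem_mem ha)
        by_cases hshalf : s ≤ 1/2
        · left
          rw [hga, List.getD_eq_getElem _ _ ha]
          linarith
        · right
          rw [hgb]
          linarith

lemma ffFold_inv (items : List ℝ) (hitems : ∀ s ∈ items, 0 < s ∧ s ≤ 1) :
    ∀ bins, FFInv bins →
      FFInv (items.foldl ffStep bins) ∧ (items.foldl ffStep bins).sum = bins.sum + items.sum := by
  induction items with
  | nil => intro bins h; simpa using h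
  | cons s t ih =>
    intro bins h
    obtain ⟨hs, hs1⟩ := hitems s (by simp)
    obtain ⟨h1, h2⟩ := ffStep_inv bins s hs hs1 h
    obtain ⟨h3, h4⟩ := ih (fun x hx => hitems x (by simp [hx])) (ffStep bins s) h1
    refine ⟨h3, ?_⟩
    rw [List.foldl_cons] at *
    rw [h4, h2, List.sum_cons]; ring

lemma half_len_le_sum (t : List ℝ) (htall : ∀ l ∈ t, (1/2 : ℝ) < l) :
    (t.length : ℝ) * (1/2) ≤ t.sum := by
  induction t with
  | nil => simp
  | cons x r ihr =>
    simp only [List.sum_cons, List.length_cons]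
    have h1 := htall x (by simp)
    have h2 := ihr (fun l hl => htall l (by simp [hl]))
    push_cast
    linarith

lemma half_sum_bound (L : List ℝ) (hpos : ∀ l ∈ L, 0 < l)
    (hQ : ∀ i j, i < j → j < L.length → (1/2 : ℝ) < L.getD i 0 ∨ (1/2 : ℝ) < L.getD j 0) :
    L.sum > ((L.length : ℝ) - 1) / 2 := by
  induction L with
  | nil => simp; norm_num
  | cons a t ih =>
    by_cases ha : (1/2 : ℝ) < a
    · have ht := ih (fun l hl => hpos l (by simp [hl]))
        (fun i j hij hjl => by
          have := hQ (i+1) (j+1) (by omega) (by simp; omega)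
          simpa using this)
      simp only [List.sum_cons, List.length_cons]
      push_cast
      linarith
    · -- a ≤ 1/2, so all elements of t are > 1/2
      have htall : ∀ l ∈ t, (1/2 : ℝ) < l := by
        intro l hl
        obtain ⟨j, hj, rfl⟩ := List.getElem_of_mem hl
        have := hQ 0 (j+1) (by omega) (by simp; omega)
        rcases this with h | h
        · simp only [List.getD_cons_zero] at h; exact absurd h ha
        · rwa [List.getD_cons_succ, List.getD_eq_getElem _ _ hj] at h
      have hsum : (t.length : ℝ) * (1/2) ≤ t.sum := half_len_le_sum t htall
      have ha0 := hpos a (by simp)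
      simp only [List.sum_cons, List.length_cons]
      push_cast
      linarith

/-- First-Fit half-full property: if First Fit packs items of sizes in `(0,1]`
into unit bins and uses `N ≥ 2` bins, the total item size exceeds `(N-1)/2`. -/
theorem first_fit_half_full (items : List ℝ)
    (hitems : ∀ s ∈ items, 0 < s ∧ s ≤ 1)
    (N : ℕ) (hN : N = (items.foldl ffStep []).length) (h2 : 2 ≤ N) :
    items.sum > ((N : ℝ) - 1) / 2 := by
  have hinv0 : FFInv [] := ⟨by simp, by simp⟩
  obtain ⟨⟨hpos, hQ⟩, hsum⟩ := ffFold_inv items hitems [] hinv0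
  have := half_sum_bound (items.foldl ffStep []) hpos hQ
  rw [hsum] at this
  simp only [List.sum_nil, zero_add] at this
  rw [hN]
  exact this
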